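/- arXiv:2511.15816 — 4 statements merged into one kernel-verified Lean document; each statement's English description precedes it below -/
import Mathlib

section
/- Let (Ω, P) be a probability space, let f : Ω → ℝ be a measurable nonnegative integrable function, and let B > 0 and α ∈ (0,1). Suppose that for every t > 0, P{ω : 0 < f(ω) ≤ t} ≤ B · t^{α/(1−α)} (the Model Margin noise tail condition). Then P{ω : f(ω) > 0} ≤ (B^{1−α} / α^α) · (∫_{{f>0}} f dP)^α. -/
open MeasureTheory Real Set

/-!
By the layer-cake formula, `∫ f = ∫₀^∞ P{f > t} dt`, and the margin condition gives
`P{f > t} ≥ p - B t^β` with `p = P{f > 0}` and `β = α / (1 - α)`. Integrating this lower bound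
over `(0, T]` and choosing the cutoff `T` where it vanishes, `B T^β = p`, yields `α p T ≤ ∫ f`;
raising to the power `α` eliminates `T`.
-/

namespace MeasureTheory

variable {Ω : Type*} [MeasurableSpace Ω] {μ : Measure Ω} {f : Ω → ℝ}

lemma measure_pos_eq_add_measure_lt (hf : Measurable f) {t : ℝ} (ht : 0 ≤ t) :
    μ {ω | 0 < f ω} = μ {ω | 0 < f ω ∧ f ω ≤ t} + μ {ω | t < f ω} := by
  rw [← measure_inter_add_sdiff {ω | 0 < f ω} (measurableSet_le hf measurable_const)]
  congr 2
  ext ω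
  simp only [mem_sdiff, mem_ofPred_eq, not_le]
  exact ⟨fun h ↦ h.2, fun h ↦ ⟨ht.trans_lt h, h⟩⟩

lemma Integrable.integrableOn_measureReal_lt (hf_int : Integrable f μ) (hf_nonneg : 0 ≤ᵐ[μ] f) :
    IntegrableOn (fun t ↦ μ.real {ω | t < f ω}) (Ioi 0) := by
  have h_anti : Antitone fun t ↦ μ {ω | t < f ω} :=
    fun s t hst ↦ measure_mono fun ω hω ↦ hst.trans_lt hω
  refine ⟨h_anti.measurable.ennreal_toReal.aestronglyMeasurable, ?_⟩
  rw [hasFiniteIntegral_iff_ofReal (.of_forall fun _ ↦ measureReal_nonneg)]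
  calc ∫⁻ t in Ioi 0, ENNReal.ofReal (μ.real {ω | t < f ω})
      = ∫⁻ t in Ioi 0, μ {ω | t < f ω} :=
        setLIntegral_congr_fun measurableSet_Ioi fun t ht ↦
          ENNReal.ofReal_toReal (measure_gt_lt_top hf_int ht).ne
    _ = ∫⁻ ω, ENNReal.ofReal (f ω) ∂μ :=
        (lintegral_eq_lintegral_meas_lt μ hf_nonneg hf_int.aemeasurable).symm
    _ < ⊤ := hf_int.lintegral_lt_top

lemma setIntegral_Ioc_measureReal_lt_le_integral (hf_int : Integrable f μ)
    (hf_nonneg : 0 ≤ᵐ[μ] f) (T : ℝ) :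
    ∫ t in Ioc 0 T, μ.real {ω | t < f ω} ≤ ∫ ω, f ω ∂μ := by
  rw [hf_int.integral_eq_integral_meas_lt hf_nonneg]
  exact setIntegral_mono_set (hf_int.integrableOn_measureReal_lt hf_nonneg)
    (.of_forall fun _ ↦ measureReal_nonneg) Ioc_subset_Ioi_self.eventuallyLE

lemma mul_sub_rpow_le_integral_of_measureReal_le [IsFiniteMeasure μ] (hf_meas : Measurable f)
    (hf_nonneg : ∀ ω, 0 ≤ f ω) (hf_int : Integrable f μ) {B β : ℝ} (hβ : -1 < β)
    (hMM : ∀ t > (0 : ℝ), μ.real {ω | 0 < f ω ∧ f ω ≤ t} ≤ B * t ^ β) {T : ℝ} (hT : 0 ≤ T) :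
    μ.real {ω | 0 < f ω} * T - B * T ^ (β + 1) / (β + 1) ≤ ∫ ω, f ω ∂μ := by
  set p := μ.real {ω | 0 < f ω}
  have h_tail : ∀ t ∈ Ioc (0 : ℝ) T, p - B * t ^ β ≤ μ.real {ω | t < f ω} := fun t ht ↦ by
    have h_split : p = μ.real {ω | 0 < f ω ∧ f ω ≤ t} + μ.real {ω | t < f ω} := by
      simp only [p, measureReal_def, measure_pos_eq_add_measure_lt hf_meas ht.1.le,
        ENNReal.toReal_add (measure_ne_top μ _) (measure_ne_top μ _)]
    linarith [hMM t ht.1]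
  have h_rpow : IntervalIntegrable (fun t ↦ t ^ β) volume 0 T :=
    intervalIntegral.intervalIntegrable_rpow' hβ
  have h_lower_int : IntegrableOn (fun t ↦ p - B * t ^ β) (Ioc 0 T) :=
    (intervalIntegrable_iff_integrableOn_Ioc_of_le hT).mp
      (intervalIntegrable_const.sub (h_rpow.const_mul B))
  have h_eval : ∫ t in Ioc 0 T, (p - B * t ^ β) = p * T - B * T ^ (β + 1) / (β + 1) := by
    rw [← intervalIntegral.integral_of_le hT, intervalIntegral.integral_sub intervalIntegrable_const
      (h_rpow.const_mul B), intervalIntegral.integral_const, intervalIntegral.integral_const_mul,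
      integral_rpow (.inl hβ), zero_rpow (by linarith), smul_eq_mul]
    ring
  calc p * T - B * T ^ (β + 1) / (β + 1) = ∫ t in Ioc 0 T, (p - B * t ^ β) := h_eval.symm
    _ ≤ ∫ t in Ioc 0 T, μ.real {ω | t < f ω} :=
      setIntegral_mono_on h_lower_int
        ((hf_int.integrableOn_measureReal_lt (.of_forall hf_nonneg)).mono_set Ioc_subset_Ioi_self)
        measurableSet_Ioc h_tail
    _ ≤ ∫ ω, f ω ∂μ := setIntegral_Ioc_measureReal_lt_le_integral hf_int (.of_forall hf_nonneg) T

end MeasureTheory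

lemma le_div_mul_rpow_of_mul_rpow_le {α B p I : ℝ} (hα0 : 0 < α) (hB : 0 < B)
    (hp : 0 ≤ p) (h : α * p * (p / B) ^ ((1 - α) / α) ≤ I) :
    p ≤ B ^ (1 - α) / α ^ α * I ^ α := by
  have h_pow : (α * p * (p / B) ^ ((1 - α) / α)) ^ α = α ^ α * p / B ^ (1 - α) := by
    rw [mul_rpow (by positivity) (by positivity), mul_rpow hα0.le hp, ← rpow_mul (by positivity),
      div_mul_cancel₀ _ hα0.ne', div_rpow hp hB.le, mul_assoc, ← mul_div_assoc,
      ← rpow_add' hp (by norm_num), add_sub_cancel, rpow_one, mul_div_assoc]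
  calc p = B ^ (1 - α) / α ^ α * (α ^ α * p / B ^ (1 - α)) := by
        field_simp
    _ ≤ B ^ (1 - α) / α ^ α * I ^ α := by
        rw [← h_pow]
        gcongr

/-- Key MM-noise property (Lemma 4.3): under the Model Margin noise tail condition,
the mass of the set where `f > 0` is bounded by a power of the integral of `f`
over that set. -/
theorem stmt_0 {Ω : Type*} [MeasurableSpace Ω] (P : Measure Ω) [IsProbabilityMeasure P]
    (f : Ω → ℝ) (hf_meas : Measurable f) (hf_nonneg : ∀ ω, 0 ≤ f ω)
    (hf_int : Integrable f P)
    (B α : ℝ) (hB : 0 < B) (hα : α ∈ Set.Ioo (0 : ℝ) 1)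
    (hMM : ∀ t > (0 : ℝ),
      (P {ω | 0 < f ω ∧ f ω ≤ t}).toReal ≤ B * t ^ (α / (1 - α))) :
    (P {ω | 0 < f ω}).toReal ≤
      (B ^ (1 - α) / α ^ α) * (∫ ω in {ω | 0 < f ω}, f ω ∂P) ^ α := by
  obtain ⟨hα0, hα1⟩ := hα
  set p := P.real {ω | 0 < f ω}
  set T := (p / B) ^ ((1 - α) / α)
  have hT : 0 ≤ T := by positivity
  have h_exp : α / (1 - α) + 1 = (1 - α)⁻¹ := by field_simp; ring
  have h_cutoff : T ^ (α / (1 - α)) = p / B := by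
    rw [← rpow_mul (by positivity), div_mul_div_cancel₀ hα0.ne', div_self (by linarith), rpow_one]
  have h_margin : p * T - B * T ^ (α / (1 - α) + 1) / (α / (1 - α) + 1) = α * p * T := by
    rw [rpow_add' hT (by rw [h_exp]; positivity), h_cutoff, rpow_one, h_exp]
    field_simp
    ring
  have h_setIntegral : ∫ ω in {ω | 0 < f ω}, f ω ∂P = ∫ ω, f ω ∂P :=
    setIntegral_eq_integral_of_forall_compl_eq_zero fun ω hω ↦
      le_antisymm (not_lt.mp hω) (hf_nonneg ω)
  rw [h_setIntegral]
  refine le_div_mul_rpow_of_mul_rpow_le hα0 hB measureReal_nonneg ?_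
  have h_lower := mul_sub_rpow_le_integral_of_measureReal_le hf_meas hf_nonneg hf_int
    (by linarith [div_pos hα0 (sub_pos.mpr hα1)]) hMM hT
  rwa [h_margin] at h_lower
end

section
/- Let (Ω, P) be a probability space, let f : Ω → ℝ be a measurable nonnegative integrable function, and let B > 0 and α ∈ (0,1). Suppose that for every t > 0, P{ω : 0 < f(ω) ≤ t} ≤ B · t^{α/(1−α)}. Then for every u > 0, ∫_{{f>0}} f dP ≥ u · P{ω : f(ω) > 0} − B(1−α) · u^{1/(1−α)}. -/
/-!
The layer-cake formula for `min f u` gives `∫ f ≥ ∫₀ᵘ P{f ≥ t} dt`. For `0 < t < u` the MM condition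
yields `P{f ≥ t} ≥ P{f > 0} - B t^{α/(1-α)}`, and integrating this bound over `(0, u)` gives the
right-hand side. Since `f ≥ 0`, the integral over `{f > 0}` is the full integral of `f`.
-/

open MeasureTheory Real Set

namespace MeasureTheory

variable {Ω : Type*} [MeasurableSpace Ω] {μ : Measure Ω} {f : Ω → ℝ}

theorem intervalIntegral_measureReal_le_le_integral (hf : Integrable f μ) (hf₀ : 0 ≤ᵐ[μ] f)
    {u : ℝ} (hu : 0 ≤ u) :
    ∫ t in (0 : ℝ)..u, μ.real {ω | t ≤ f ω} ≤ ∫ ω, f ω ∂μ := by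
  have hmin₀ : 0 ≤ᵐ[μ] fun ω ↦ min (f ω) u := by
    filter_upwards [hf₀] with ω hω using le_min hω hu
  have hmin : Integrable (fun ω ↦ min (f ω) u) μ := by
    refine hf.mono' (hf.aestronglyMeasurable.inf aestronglyMeasurable_const) ?_
    filter_upwards [hmin₀] with ω hω
    rw [Real.norm_of_nonneg hω]
    exact min_le_left _ _
  calc ∫ t in (0 : ℝ)..u, μ.real {ω | t ≤ f ω}
      = ∫ t in Ioc 0 u, μ.real {ω | t ≤ min (f ω) u} := by
        rw [intervalIntegral.integral_of_le hu]
        refine setIntegral_congr_fun measurableSet_Ioc fun t ht ↦ ?_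
        simp only [le_min_iff, ht.2, and_true]
    _ = ∫ ω, min (f ω) u ∂μ :=
        (hmin.integral_eq_integral_Ioc_meas_le hmin₀
          (ae_of_all _ fun _ ↦ min_le_right _ _)).symm
    _ ≤ ∫ ω, f ω ∂μ := integral_mono_ae hmin hf (ae_of_all _ fun _ ↦ min_le_left _ _)

theorem measureReal_pos_sub_le_measureReal_le [IsFiniteMeasure μ] (t : ℝ) :
    μ.real {ω | 0 < f ω} - μ.real {ω | 0 < f ω ∧ f ω ≤ t} ≤ μ.real {ω | t ≤ f ω} := by
  have hsdiff : {ω | 0 < f ω} \ {ω | t ≤ f ω} ⊆ {ω | 0 < f ω ∧ f ω ≤ t} :=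
    fun ω ⟨hpos, hlt⟩ ↦ ⟨hpos, (not_le.mp hlt).le⟩
  linarith [le_measureReal_sdiff (μ := μ) (s₁ := {ω | 0 < f ω}) (s₂ := {ω | t ≤ f ω}),
    measureReal_mono (μ := μ) hsdiff]

end MeasureTheory

theorem integral_const_sub_mul_rpow {β : ℝ} (hβ : -1 < β) (c B u : ℝ) :
    ∫ t in (0 : ℝ)..u, (c - B * t ^ β) = u * c - B * u ^ (β + 1) / (β + 1) := by
  rw [intervalIntegral.integral_sub intervalIntegrable_const
      ((intervalIntegral.intervalIntegrable_rpow' hβ).const_mul B),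
    intervalIntegral.integral_const, intervalIntegral.integral_const_mul,
    integral_rpow (Or.inl hβ), Real.zero_rpow (by linarith : β + 1 ≠ 0)]
  simp only [sub_zero, smul_eq_mul]
  ring

theorem stmt_1_general {Ω : Type*} [MeasurableSpace Ω] (P : Measure Ω) [IsProbabilityMeasure P]
    (f : Ω → ℝ) (hf_nonneg : ∀ ω, 0 ≤ f ω)
    (hf_int : Integrable f P)
    (B α : ℝ) (hα : α ∈ Set.Ioo (0 : ℝ) 1)
    (hMM : ∀ t > (0 : ℝ),
      (P {ω | 0 < f ω ∧ f ω ≤ t}).toReal ≤ B * t ^ (α / (1 - α))) :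
    ∀ u > (0 : ℝ),
      u * (P {ω | 0 < f ω}).toReal - B * (1 - α) * u ^ (1 / (1 - α)) ≤
        ∫ ω in {ω | 0 < f ω}, f ω ∂P := by
  intro u hu
  have h1α : 0 < 1 - α := sub_pos.mpr hα.2
  have hβ : -1 < α / (1 - α) := by rw [lt_div_iff₀ h1α]; linarith
  have hβ1 : α / (1 - α) + 1 = 1 / (1 - α) := by field_simp; ring
  have hg : IntervalIntegrable (fun t ↦ P.real {ω | t ≤ f ω}) volume 0 u :=
    Antitone.intervalIntegrable fun s t hst ↦ measureReal_mono fun ω hω ↦ hst.trans hω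
  calc u * (P {ω | 0 < f ω}).toReal - B * (1 - α) * u ^ (1 / (1 - α))
      = ∫ t in (0 : ℝ)..u, (P.real {ω | 0 < f ω} - B * t ^ (α / (1 - α))) := by
        rw [integral_const_sub_mul_rpow hβ, hβ1, measureReal_def]
        field_simp
    _ ≤ ∫ t in (0 : ℝ)..u, P.real {ω | t ≤ f ω} := by
        refine intervalIntegral.integral_mono_on_of_le_Ioo hu.le
          (intervalIntegrable_const.sub
            ((intervalIntegral.intervalIntegrable_rpow' hβ).const_mul B)) hg fun t ht ↦ ?_
        linarith [measureReal_pos_sub_le_measureReal_le (μ := P) (f := f) t, hMM t ht.1,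
          measureReal_def P {ω | 0 < f ω ∧ f ω ≤ t}]
    _ ≤ ∫ ω, f ω ∂P :=
        intervalIntegral_measureReal_le_le_integral hf_int (ae_of_all _ hf_nonneg) hu.le
    _ = ∫ ω in {ω | 0 < f ω}, f ω ∂P :=
        (setIntegral_eq_integral_of_forall_compl_eq_zero fun ω hω ↦
          le_antisymm (not_lt.mp hω) (hf_nonneg ω)).symm

/-- Intermediate inequality in the proof of the key MM-noise property:
for every truncation level `u > 0`, the integral of `f` over `{f > 0}` dominates
`u · P{f > 0} − B(1−α) · u^{1/(1−α)}`. -/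
theorem stmt_1 {Ω : Type*} [MeasurableSpace Ω] (P : Measure Ω) [IsProbabilityMeasure P]
    (f : Ω → ℝ) (hf_meas : Measurable f) (hf_nonneg : ∀ ω, 0 ≤ f ω)
    (hf_int : Integrable f P)
    (B α : ℝ) (hB : 0 < B) (hα : α ∈ Set.Ioo (0 : ℝ) 1)
    (hMM : ∀ t > (0 : ℝ),
      (P {ω | 0 < f ω ∧ f ω ≤ t}).toReal ≤ B * t ^ (α / (1 - α))) :
    ∀ u > (0 : ℝ),
      u * (P {ω | 0 < f ω}).toReal - B * (1 - α) * u ^ (1 / (1 - α)) ≤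
        ∫ ω in {ω | 0 < f ω}, f ω ∂P :=
  stmt_1_general P f hf_nonneg hf_int B α hα hMM
end

section
/- Let (X, P) be a probability space, let s > 1 with conjugate exponent t = s/(s−1), and let g, f, m : X → ℝ be measurable functions with g ≥ 0, m ≥ 0, f ≥ 0, and f integrable. Assume that for every x ∈ X: (i) g(x) ≤ m(x), and (ii) g(x) ≤ (f(x))^{1/s}. Then ∫ g dP ≤ (P{x : m(x) > 0})^{1/t} · (∫ f dP)^{1/s}. -/
open MeasureTheory Real Set

open scoped ENNReal

/-!
On `A = {m > 0}` the bound `g ≤ f ^ (1/s)` applies, and off `A` we have `g ≤ m ≤ 0`; hence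
`g ≤ 𝟙_A · f ^ (1/s)`. Hölder's inequality with exponents `t` and `s` for the product of
`𝟙_A` and `f ^ (1/s)` gives `∫ 𝟙_A · f ^ (1/s) ≤ P(A) ^ (1/t) · (∫ f) ^ (1/s)`.
-/

section

variable {α : Type*} [MeasurableSpace α] (μ : Measure α)

theorem integral_le_toReal_lintegral_ofReal (g : α → ℝ) :
    ∫ x, g x ∂μ ≤ (∫⁻ x, ENNReal.ofReal (g x) ∂μ).toReal := by
  by_cases hg : Integrable g μ
  · rw [integral_eq_lintegral_pos_part_sub_lintegral_neg_part hg]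
    exact sub_le_self _ ENNReal.toReal_nonneg
  · rw [integral_undef hg]
    exact ENNReal.toReal_nonneg

theorem setLIntegral_rpow_one_div_le {p q : ℝ} (hpq : p.HolderConjugate q) (A : Set α)
    {F : α → ℝ≥0∞} (hF : AEMeasurable F μ) :
    ∫⁻ x in A, F x ^ (1 / q) ∂μ ≤ μ A ^ (1 / p) * (∫⁻ x in A, F x ∂μ) ^ (1 / q) := by
  have holder := ENNReal.lintegral_mul_le_Lp_mul_Lq (μ.restrict A) hpq
    (aemeasurable_const (b := (1 : ℝ≥0∞))) (hF.restrict.pow_const (1 / q))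
  have hF_rpow : ∀ x, (F x ^ (1 / q)) ^ q = F x := fun x => by
    rw [← ENNReal.rpow_mul, one_div_mul_cancel hpq.symm.ne_zero, ENNReal.rpow_one]
  simp only [hF_rpow] at holder
  simpa using holder

theorem integral_le_measure_rpow_mul_integral_rpow [IsFiniteMeasure μ] {p q : ℝ}
    (hpq : p.HolderConjugate q) {f g : α → ℝ} (hf_nonneg : ∀ x, 0 ≤ f x) (hf_int : Integrable f μ)
    (A : Set α) (hgf : ∀ x, g x ≤ A.indicator (fun y => f y ^ (1 / q)) x) :
    ∫ x, g x ∂μ ≤ (μ A).toReal ^ (1 / p) * (∫ x, f x ∂μ) ^ (1 / q) := by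
  have hq : 0 ≤ 1 / q := one_div_nonneg.2 hpq.symm.nonneg
  have hgf' : ∀ x, ENNReal.ofReal (g x) ≤ A.indicator (fun y => ENNReal.ofReal (f y) ^ (1 / q)) x :=
    fun x => by
      by_cases hx : x ∈ A
      · rw [indicator_of_mem hx, ENNReal.ofReal_rpow_of_nonneg (hf_nonneg x) hq]
        simpa [hx] using ENNReal.ofReal_le_ofReal (hgf x)
      · simpa [hx] using hgf x
  have hf_lintegral : ∫⁻ x, ENNReal.ofReal (f x) ∂μ = ENNReal.ofReal (∫ x, f x ∂μ) :=
    (ofReal_integral_eq_lintegral_ofReal hf_int (.of_forall hf_nonneg)).symm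
  have key : ∫⁻ x, ENNReal.ofReal (g x) ∂μ ≤
      μ A ^ (1 / p) * ENNReal.ofReal (∫ x, f x ∂μ) ^ (1 / q) :=
    calc ∫⁻ x, ENNReal.ofReal (g x) ∂μ
        ≤ ∫⁻ x in A, ENNReal.ofReal (f x) ^ (1 / q) ∂μ :=
          (lintegral_mono hgf').trans (lintegral_indicator_le _ _)
      _ ≤ μ A ^ (1 / p) * (∫⁻ x in A, ENNReal.ofReal (f x) ∂μ) ^ (1 / q) :=
          setLIntegral_rpow_one_div_le μ hpq A hf_int.aemeasurable.ennreal_ofReal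
      _ ≤ μ A ^ (1 / p) * ENNReal.ofReal (∫ x, f x ∂μ) ^ (1 / q) := by
          rw [← hf_lintegral]
          gcongr
          exact Measure.restrict_le_self
  have hfin : μ A ^ (1 / p) * ENNReal.ofReal (∫ x, f x ∂μ) ^ (1 / q) ≠ ∞ :=
    ENNReal.mul_ne_top (ENNReal.rpow_ne_top_of_nonneg (one_div_nonneg.2 hpq.nonneg)
      (measure_ne_top μ A)) (ENNReal.rpow_ne_top_of_nonneg hq ENNReal.ofReal_ne_top)
  calc ∫ x, g x ∂μ ≤ (∫⁻ x, ENNReal.ofReal (g x) ∂μ).toReal :=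
        integral_le_toReal_lintegral_ofReal μ g
    _ ≤ (μ A ^ (1 / p) * ENNReal.ofReal (∫ x, f x ∂μ) ^ (1 / q)).toReal :=
        ENNReal.toReal_mono hfin key
    _ = (μ A).toReal ^ (1 / p) * (∫ x, f x ∂μ) ^ (1 / q) := by
        rw [ENNReal.toReal_mul, ← ENNReal.toReal_rpow, ← ENNReal.toReal_rpow,
          ENNReal.toReal_ofReal (integral_nonneg hf_nonneg)]

end

theorem stmt_4_general {X : Type*} [MeasurableSpace X] (P : Measure X) [IsProbabilityMeasure P]
    (s t : ℝ) (hs : 1 < s) (ht : t = s / (s - 1))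
    (g f m : X → ℝ)
    (hf_nonneg : ∀ x, 0 ≤ f x)
    (hf_int : Integrable f P)
    (hgm : ∀ x, g x ≤ m x)
    (hgf : ∀ x, g x ≤ f x ^ (1 / s)) :
    ∫ x, g x ∂P ≤
      (P {x | 0 < m x}).toReal ^ (1 / t) * (∫ x, f x ∂P) ^ (1 / s) := by
  have hts : t.HolderConjugate s := ((holderConjugate_iff_eq_conjExponent hs).2 ht).symm
  refine integral_le_measure_rpow_mul_integral_rpow P hts hf_nonneg hf_int _ fun x => ?_
  by_cases hx : 0 < m x
  · simpa [hx] using hgf x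
  · simpa [hx] using (hgm x).trans (not_lt.1 hx)

/-- Abstract form of Theorem 5.1 (multi-class H-consistency bound under the model
margin): if `g ≤ m` and `g ≤ f^{1/s}` pointwise, then
`∫ g ≤ (P{m > 0})^{1/t} · (∫ f)^{1/s}` with `t` the conjugate exponent of `s`. -/
theorem stmt_4 {X : Type*} [MeasurableSpace X] (P : Measure X) [IsProbabilityMeasure P]
    (s t : ℝ) (hs : 1 < s) (ht : t = s / (s - 1))
    (g f m : X → ℝ)
    (hg_meas : Measurable g) (hf_meas : Measurable f) (hm_meas : Measurable m)
    (hg_nonneg : ∀ x, 0 ≤ g x) (hm_nonneg : ∀ x, 0 ≤ m x) (hf_nonneg : ∀ x, 0 ≤ f x)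
    (hf_int : Integrable f P)
    (hgm : ∀ x, g x ≤ m x)
    (hgf : ∀ x, g x ≤ f x ^ (1 / s)) :
    ∫ x, g x ∂P ≤
      (P {x | 0 < m x}).toReal ^ (1 / t) * (∫ x, f x ∂P) ^ (1 / s) :=
  stmt_4_general P s t hs ht g f m hf_nonneg hf_int hgm hgf
end

section
/- Let (X, P) be a probability space, let s > 1 with conjugate exponent t = s/(s−1), let α ∈ (0,1) and B > 0, and let g, f, m : X → ℝ be measurable functions with g ≥ 0, m ≥ 0, f ≥ 0, f integrable and m integrable. Assume: (i) g(x) ≤ m(x) and g(x) ≤ (f(x))^{1/s} for every x ∈ X; (ii) for every τ > 0, P{x : 0 < m(x) ≤ τ} ≤ B · τ^{α/(1−α)}; and (iii) ∫ g dP = ∫_{{m>0}} m dP. Then, with c = B^{1−α}/α^α, ∫ g dP ≤ c^{(s−1)/(s−α(s−1))} · (∫ f dP)^{1/(s−α(s−1))}. -/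
/-!
As `g ≤ m`, `g` vanishes off `A = {m > 0}`, so Hölder's inequality gives
`∫ g ≤ ∫_A f^{1/s} ≤ (∫ f)^{1/s} P(A)^{1/t}`. The noise condition bounds `P(A)` by the excess
risk: by the layer-cake formula `∫ m = ∫_0^∞ P(m > r) dr ≥ ∫_0^T (P(A) - B r^{α/(1-α)}) dr`, and
the cut-off `T` where the integrand vanishes gives `P(A) ≤ c (∫ m)^α`. Since `∫ m = ∫ g`, this
yields `∫ g ≤ (∫ f)^{1/s} (c (∫ g)^α)^{1/t}`, which is solved for `∫ g`.
-/

open MeasureTheory Real Set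

theorem integral_sub_mul_rpow {β : ℝ} (hβ : 0 ≤ β) (p B T : ℝ) :
    ∫ r in (0 : ℝ)..T, (p - B * r ^ β) = p * T - B * T ^ (β + 1) / (β + 1) := by
  have hrpow : IntervalIntegrable (fun r : ℝ => r ^ β) MeasureSpace.volume 0 T :=
    intervalIntegral.intervalIntegrable_rpow' (by linarith)
  rw [intervalIntegral.integral_sub intervalIntegrable_const (hrpow.const_mul B),
    intervalIntegral.integral_const, intervalIntegral.integral_const_mul,
    integral_rpow (Or.inl (by linarith)), zero_rpow (by positivity), smul_eq_mul]
  ring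

theorem le_rpow_mul_rpow_of_self_bound {I F c s t α : ℝ} (hs : 1 < s) (ht : t = s / (s - 1))
    (hα : α ≤ 1) (hI : 0 ≤ I) (hF : 0 ≤ F) (hc : 0 ≤ c)
    (h : I ≤ F ^ (1 / s) * (c * I ^ α) ^ (1 / t)) :
    I ≤ c ^ ((s - 1) / (s - α * (s - 1))) * F ^ (1 / (s - α * (s - 1))) := by
  subst ht
  set D := s - α * (s - 1) with hD_def
  have hD : 0 < D := by nlinarith
  rcases hI.eq_or_lt with rfl | hI
  · positivity
  have hpow : (c * I ^ α) ^ (1 / (s / (s - 1))) = c ^ ((s - 1) / s) * I ^ (α * (s - 1) / s) := by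
    rw [mul_rpow hc (rpow_nonneg hI.le α), ← rpow_mul hI.le, one_div_div, mul_div_assoc]
  have hself : I ^ (D / s) ≤ F ^ (1 / s) * c ^ ((s - 1) / s) := by
    refine le_of_mul_le_mul_right ?_ (rpow_pos_of_pos hI (α * (s - 1) / s))
    rwa [← rpow_add hI, ← add_div, hD_def, sub_add_cancel, div_self (by linarith), rpow_one,
      mul_assoc, ← hpow]
  calc I = (I ^ (D / s)) ^ (s / D) := by
        rw [← rpow_mul hI.le, div_mul_div_cancel₀ (by linarith), div_self hD.ne', rpow_one]
    _ ≤ (F ^ (1 / s) * c ^ ((s - 1) / s)) ^ (s / D) := by gcongr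
    _ = c ^ ((s - 1) / D) * F ^ (1 / D) := by
        rw [mul_rpow (by positivity) (by positivity), ← rpow_mul hF, ← rpow_mul hc, mul_comm]
        congr 2 <;> field_simp

namespace MeasureTheory

variable {X : Type*} [MeasurableSpace X] {μ : Measure X}

theorem Integrable.memLp_rpow_one_div {f : X → ℝ} (hf : Integrable f μ) (hf0 : 0 ≤ f)
    {s : ℝ} (hs : 0 < s) : MemLp (fun x => f x ^ (1 / s)) (ENNReal.ofReal s) μ := by
  have h := (memLp_one_iff_integrable.2 hf).norm_rpow_div (ENNReal.ofReal (1 / s))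
  rw [ENNReal.toReal_ofReal (by positivity), ← ENNReal.ofReal_one,
    ← ENNReal.ofReal_div_of_pos (by positivity), one_div_one_div] at h
  simpa only [Real.norm_of_nonneg (hf0 _)] using h

theorem integral_rpow_one_div_le [IsFiniteMeasure μ] {s t : ℝ} (hst : s.HolderConjugate t)
    {f : X → ℝ} (hf : Integrable f μ) (hf0 : 0 ≤ f) :
    ∫ x, f x ^ (1 / s) ∂μ ≤ (∫ x, f x ∂μ) ^ (1 / s) * μ.real univ ^ (1 / t) := by
  have h := integral_mul_le_Lp_mul_Lq_of_nonneg hst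
    (ae_of_all _ fun x => rpow_nonneg (hf0 x) (1 / s)) (ae_of_all _ fun _ => zero_le_one)
    (hf.memLp_rpow_one_div hf0 hst.pos) (memLp_const 1)
  simpa only [mul_one, one_rpow, integral_const, smul_eq_mul,
    ← rpow_mul (hf0 _), one_div_mul_cancel hst.ne_zero, rpow_one] using h

theorem integral_le_integral_rpow_mul_measureReal_rpow [IsFiniteMeasure μ] {s t : ℝ}
    (hst : s.HolderConjugate t) {A : Set X} {f g : X → ℝ} (hf : Integrable f μ) (hf0 : 0 ≤ f)
    (hg0 : 0 ≤ g) (hgf : ∀ x, g x ≤ f x ^ (1 / s)) (hgA : ∀ x ∉ A, g x = 0) :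
    ∫ x, g x ∂μ ≤ (∫ x, f x ∂μ) ^ (1 / s) * μ.real A ^ (1 / t) := by
  have hfs : Integrable (fun x => f x ^ (1 / s)) μ :=
    (hf.memLp_rpow_one_div hf0 hst.pos).integrable (ENNReal.one_le_ofReal.2 hst.lt.le)
  calc ∫ x, g x ∂μ = ∫ x in A, g x ∂μ := (setIntegral_eq_integral_of_forall_compl_eq_zero hgA).symm
    _ ≤ ∫ x in A, f x ^ (1 / s) ∂μ :=
        integral_mono_of_nonneg (ae_of_all _ hg0) hfs.restrict (ae_of_all _ hgf)
    _ ≤ (∫ x in A, f x ∂μ) ^ (1 / s) * (μ.restrict A).real univ ^ (1 / t) :=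
        integral_rpow_one_div_le hst hf.restrict hf0
    _ ≤ (∫ x, f x ∂μ) ^ (1 / s) * μ.real A ^ (1 / t) := by
        rw [measureReal_restrict_apply_univ]
        gcongr
        · exact integral_nonneg hf0
        · exact hst.one_div_nonneg
        · exact ae_of_all _ hf0
        · exact Measure.restrict_le_self

theorem Integrable.integrableOn_Ioi_measureReal_lt {m : X → ℝ} (hm : Integrable m μ)
    (hm0 : 0 ≤ m) : IntegrableOn (fun r => μ.real {x | r < m x}) (Ioi 0) := by
  have hmeas : Measurable fun r => μ.real {x | r < m x} :=
    Measurable.ennreal_toReal (f := fun r => μ {x | r < m x})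
      (Antitone.measurable fun _ _ huv => measure_mono fun _ hx => huv.trans_lt hx)
  refine ⟨hmeas.aestronglyMeasurable, ?_⟩
  calc ∫⁻ r in Ioi 0, ‖μ.real {x | r < m x}‖ₑ
      ≤ ∫⁻ r in Ioi 0, μ {x | r < m x} :=
        lintegral_mono fun r => by
          rw [Real.enorm_eq_ofReal measureReal_nonneg]; exact ENNReal.ofReal_toReal_le
    _ = ∫⁻ x, ENNReal.ofReal (m x) ∂μ :=
        (lintegral_eq_lintegral_meas_lt μ (ae_of_all _ hm0) hm.aemeasurable).symm
    _ < ⊤ := hm.lintegral_lt_top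

theorem Integrable.setIntegral_Ioc_measureReal_lt_le_integral {m : X → ℝ}
    (hm : Integrable m μ) (hm0 : 0 ≤ m) (T : ℝ) :
    ∫ r in Ioc 0 T, μ.real {x | r < m x} ≤ ∫ x, m x ∂μ := by
  rw [hm.integral_eq_integral_meas_lt (ae_of_all _ hm0)]
  exact setIntegral_mono_set (hm.integrableOn_Ioi_measureReal_lt hm0)
    (ae_of_all _ fun _ => measureReal_nonneg) Ioc_subset_Ioi_self.eventuallyLE

def HasMarginNoise (μ : Measure X) (m : X → ℝ) (B α : ℝ) : Prop :=
  ∀ τ > (0 : ℝ), μ.real {x | 0 < m x ∧ m x ≤ τ} ≤ B * τ ^ (α / (1 - α))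

namespace HasMarginNoise

variable {m : X → ℝ} {B α : ℝ} [IsFiniteMeasure μ]

theorem measureReal_sub_le (hMM : HasMarginNoise μ m B α) {r : ℝ} (hr : 0 < r) :
    μ.real {x | 0 < m x} - B * r ^ (α / (1 - α)) ≤ μ.real {x | r < m x} := by
  have hcover : {x | 0 < m x} ⊆ {x | r < m x} ∪ {x | 0 < m x ∧ m x ≤ r} := fun x hx => by
    by_cases h : r < m x
    · exact Or.inl h
    · exact Or.inr ⟨hx, not_lt.1 h⟩
  linarith [measureReal_mono (μ := μ) hcover, measureReal_union_le (μ := μ) {x | r < m x}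
    {x | 0 < m x ∧ m x ≤ r}, hMM r hr]

theorem mul_mul_rpow_le_integral (hMM : HasMarginNoise μ m B α) (hB : 0 < B)
    (hα : α ∈ Ioo 0 1) (hm : Integrable m μ) (hm0 : 0 ≤ m) :
    α * B * (μ.real {x | 0 < m x} / B) ^ (1 / α) ≤ ∫ x, m x ∂μ := by
  obtain ⟨hα0, hα1⟩ := hα
  set q := μ.real {x | 0 < m x} / B
  set β := α / (1 - α) with hβ_def
  have hq : 0 ≤ q := div_nonneg measureReal_nonneg hB.le
  have hβ : 0 < β := div_pos hα0 (by linarith)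
  set T := q ^ (1 / β)
  have hT : 0 ≤ T := rpow_nonneg hq _
  have hTβ : T ^ β = q := by rw [← rpow_mul hq, one_div_mul_cancel hβ.ne', rpow_one]
  have hcomp : ∫ r in Ioc 0 T, (B * q - B * r ^ β) = α * B * q ^ (1 / α) := by
    rw [← intervalIntegral.integral_of_le hT, integral_sub_mul_rpow hβ.le,
      rpow_add_one' hT (by positivity), hTβ]
    have hβ1 : β + 1 = 1 / (1 - α) := by rw [hβ_def]; field_simp; ring
    have hqT : q ^ (1 / α) = q * T := by
      rw [← rpow_one_add' hq (by positivity), hβ_def]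
      congr 1
      field_simp
      ring
    rw [hqT, hβ1]
    field_simp
    ring
  calc α * B * q ^ (1 / α) = ∫ r in Ioc 0 T, (B * q - B * r ^ β) := hcomp.symm
    _ ≤ ∫ r in Ioc 0 T, μ.real {x | r < m x} := by
        refine setIntegral_mono_on ?_ ?_ measurableSet_Ioc fun r hr => ?_
        · exact (continuous_const.sub (continuous_const.mul
            (continuous_id.rpow_const fun _ => Or.inr hβ.le))).integrableOn_Ioc
        · exact (hm.integrableOn_Ioi_measureReal_lt hm0).mono_set Ioc_subset_Ioi_self
        · rw [mul_div_cancel₀ _ hB.ne']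
          exact hMM.measureReal_sub_le hr.1
    _ ≤ ∫ x, m x ∂μ := hm.setIntegral_Ioc_measureReal_lt_le_integral hm0 T

theorem measureReal_pos_le (hMM : HasMarginNoise μ m B α) (hB : 0 < B)
    (hα : α ∈ Ioo 0 1) (hm : Integrable m μ) (hm0 : 0 ≤ m) :
    μ.real {x | 0 < m x} ≤ B ^ (1 - α) / α ^ α * (∫ x, m x ∂μ) ^ α := by
  have key := hMM.mul_mul_rpow_le_integral hB hα hm hm0
  obtain ⟨hα0, -⟩ := hα
  set p := μ.real {x | 0 < m x}
  set I := ∫ x, m x ∂μ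
  have hI : 0 ≤ I := integral_nonneg hm0
  have hpB : 0 ≤ p / B := div_nonneg measureReal_nonneg hB.le
  have hq : (p / B) ^ (1 / α) ≤ I / (α * B) := by
    rw [le_div_iff₀ (by positivity)]
    linarith
  calc p = B * ((p / B) ^ (1 / α)) ^ α := by
        rw [← rpow_mul hpB, one_div_mul_cancel hα0.ne', rpow_one, mul_div_cancel₀ _ hB.ne']
    _ ≤ B * (I / (α * B)) ^ α := by gcongr
    _ = B ^ (1 - α) / α ^ α * I ^ α := by
        rw [div_rpow hI (by positivity), mul_rpow hα0.le hB.le, rpow_sub hB, rpow_one]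
        field_simp

end HasMarginNoise

end MeasureTheory

theorem stmt_5_general {X : Type*} [MeasurableSpace X] (P : Measure X) [IsProbabilityMeasure P]
    (s t : ℝ) (hs : 1 < s) (ht : t = s / (s - 1))
    (B α : ℝ) (hB : 0 < B) (hα : α ∈ Set.Ioo (0 : ℝ) 1)
    (g f m : X → ℝ)
    (hg_nonneg : ∀ x, 0 ≤ g x) (hm_nonneg : ∀ x, 0 ≤ m x) (hf_nonneg : ∀ x, 0 ≤ f x)
    (hf_int : Integrable f P) (hm_int : Integrable m P)
    (hgm : ∀ x, g x ≤ m x)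
    (hgf : ∀ x, g x ≤ f x ^ (1 / s))
    (hMM : ∀ τ > (0 : ℝ),
      (P {x | 0 < m x ∧ m x ≤ τ}).toReal ≤ B * τ ^ (α / (1 - α)))
    (hbayes : ∫ x, g x ∂P = ∫ x in {x | 0 < m x}, m x ∂P) :
    ∫ x, g x ∂P ≤
      (B ^ (1 - α) / α ^ α) ^ ((s - 1) / (s - α * (s - 1))) *
        (∫ x, f x ∂P) ^ (1 / (s - α * (s - 1))) := by
  have hst : s.HolderConjugate t := (holderConjugate_iff_eq_conjExponent hs).2 ht
  have hg_off : ∀ x ∉ {x | 0 < m x}, g x = 0 := fun x hx =>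
    le_antisymm ((hgm x).trans (not_lt.1 hx)) (hg_nonneg x)
  have hm_off : ∀ x ∉ {x | 0 < m x}, m x = 0 := fun x hx =>
    le_antisymm (not_lt.1 hx) (hm_nonneg x)
  have hmargin : P.real {x | 0 < m x} ≤ B ^ (1 - α) / α ^ α * (∫ x, g x ∂P) ^ α := by
    rw [hbayes, setIntegral_eq_integral_of_forall_compl_eq_zero hm_off]
    exact HasMarginNoise.measureReal_pos_le hMM hB hα hm_int hm_nonneg
  refine le_rpow_mul_rpow_of_self_bound hs ht hα.2.le (integral_nonneg hg_nonneg)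
    (integral_nonneg hf_nonneg) (div_nonneg (rpow_nonneg hB.le _) (rpow_nonneg hα.1.le _)) ?_
  calc ∫ x, g x ∂P ≤ (∫ x, f x ∂P) ^ (1 / s) * P.real {x | 0 < m x} ^ (1 / t) :=
        integral_le_integral_rpow_mul_measureReal_rpow hst hf_int hf_nonneg hg_nonneg hgf hg_off
    _ ≤ (∫ x, f x ∂P) ^ (1 / s) * (B ^ (1 - α) / α ^ α * (∫ x, g x ∂P) ^ α) ^ (1 / t) :=
        mul_le_mul_of_nonneg_left (rpow_le_rpow measureReal_nonneg hmargin hst.symm.one_div_nonneg)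
          (rpow_nonneg (integral_nonneg hf_nonneg) _)

/-- Abstract form of Theorem 5.2 (enhanced multi-class H-consistency bound under
Model Margin noise): under the pointwise bounds `g ≤ m`, `g ≤ f^{1/s}`, the MM noise
tail condition on `m`, and `∫ g = ∫_{m>0} m`, we have
`∫ g ≤ c^{(s−1)/(s−α(s−1))} · (∫ f)^{1/(s−α(s−1))}` with `c = B^{1−α}/α^α`. -/
theorem stmt_5 {X : Type*} [MeasurableSpace X] (P : Measure X) [IsProbabilityMeasure P]
    (s t : ℝ) (hs : 1 < s) (ht : t = s / (s - 1))
    (B α : ℝ) (hB : 0 < B) (hα : α ∈ Set.Ioo (0 : ℝ) 1)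
    (g f m : X → ℝ)
    (hg_meas : Measurable g) (hf_meas : Measurable f) (hm_meas : Measurable m)
    (hg_nonneg : ∀ x, 0 ≤ g x) (hm_nonneg : ∀ x, 0 ≤ m x) (hf_nonneg : ∀ x, 0 ≤ f x)
    (hf_int : Integrable f P) (hm_int : Integrable m P)
    (hgm : ∀ x, g x ≤ m x)
    (hgf : ∀ x, g x ≤ f x ^ (1 / s))
    (hMM : ∀ τ > (0 : ℝ),
      (P {x | 0 < m x ∧ m x ≤ τ}).toReal ≤ B * τ ^ (α / (1 - α)))
    (hbayes : ∫ x, g x ∂P = ∫ x in {x | 0 < m x}, m x ∂P) :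
    ∫ x, g x ∂P ≤
      (B ^ (1 - α) / α ^ α) ^ ((s - 1) / (s - α * (s - 1))) *
        (∫ x, f x ∂P) ^ (1 / (s - α * (s - 1))) :=
  stmt_5_general P s t hs ht B α hB hα g f m hg_nonneg hm_nonneg hf_nonneg hf_int hm_int hgm hgf hMM
    hbayes
end
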